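/- arXiv:1110.6485 — 2 statements merged into one kernel-verified Lean document; each statement's English description precedes it below -/
import Mathlib

section
/- For any subset S of ℝⁿ and any 0 ≤ m ≤ n, the m-dimensional Hausdorff measure of S is bounded above by a dimensional constant times the m-dimensional lower Minkowski content of S. In particular, if the lower Minkowski content vanishes, then H^m(S) = 0. -/
/-!
Cover `S` by the half-open grid cubes of side `δ = ε / (√n + 1)` that meet it. Each has diameter
`√n δ < ε`, so these cubes form admissible covers for `μH[m]` as `ε → 0`, and they are disjoint
and lie in the `ε`-neighbourhood of `S`, so there are at most `vol(S_ε) / δⁿ` of them. Hence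
`∑ diam^m ≤ εᵐ vol(S_ε) / δⁿ = (√n + 1)ⁿ vol(S_ε) / εⁿ⁻ᵐ`.
-/

open MeasureTheory Metric Filter Set Function
open scoped ENNReal

namespace MinkowskiContent

variable {n : ℕ}

def gridCube (δ : ℝ) (z : Fin n → ℤ) : Set (EuclideanSpace ℝ (Fin n)) :=
  (MeasurableEquiv.toLp 2 (Fin n → ℝ)).symm ⁻¹' univ.pi fun i => Ico (δ * z i) (δ * z i + δ)

lemma mem_gridCube {δ : ℝ} {z : Fin n → ℤ} {x : EuclideanSpace ℝ (Fin n)} :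
    x ∈ gridCube δ z ↔ ∀ i, δ * z i ≤ x i ∧ x i < δ * z i + δ := by
  simp [gridCube, Set.mem_pi]

lemma measurableSet_gridCube (δ : ℝ) (z : Fin n → ℤ) : MeasurableSet (gridCube δ z) :=
  (MeasurableEquiv.toLp 2 (Fin n → ℝ)).symm.measurable
    (MeasurableSet.univ_pi fun _ => measurableSet_Ico)

lemma volume_gridCube (δ : ℝ) (z : Fin n → ℤ) :
    volume (gridCube δ z) = ENNReal.ofReal δ ^ n := by
  rw [gridCube,
    (EuclideanSpace.volume_preserving_symm_measurableEquiv_toLp (Fin n)).measure_preimage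
      (MeasurableSet.univ_pi fun _ => measurableSet_Ico).nullMeasurableSet]
  simp [volume_pi_pi, Real.volume_Ico]

lemma mem_gridCube_floor {δ : ℝ} (hδ : 0 < δ) (x : EuclideanSpace ℝ (Fin n)) :
    x ∈ gridCube δ (fun i => ⌊x i / δ⌋) := by
  refine mem_gridCube.2 fun i => ⟨?_, ?_⟩
  · calc δ * ⌊x i / δ⌋ ≤ δ * (x i / δ) := by gcongr; exact Int.floor_le _
      _ = x i := by field_simp
  · have := (div_lt_iff₀ hδ).1 (Int.lt_floor_add_one (x i / δ))
    push_cast at this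
    linarith

lemma eq_floor_of_mem_gridCube {δ : ℝ} (hδ : 0 < δ) {z : Fin n → ℤ}
    {x : EuclideanSpace ℝ (Fin n)} (hx : x ∈ gridCube δ z) : z = fun i => ⌊x i / δ⌋ := by
  funext i
  obtain ⟨h₁, h₂⟩ := mem_gridCube.1 hx i
  refine (Int.floor_eq_iff.2 ⟨?_, ?_⟩).symm
  · rwa [le_div_iff₀ hδ, mul_comm]
  · rw [div_lt_iff₀ hδ]; linarith

lemma pairwise_disjoint_gridCube {δ : ℝ} (hδ : 0 < δ) :
    Pairwise (Disjoint on fun z : Fin n → ℤ => gridCube δ z) := fun _ _ hne =>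
  Set.disjoint_left.2 fun _ hx hx' =>
    hne ((eq_floor_of_mem_gridCube hδ hx).trans (eq_floor_of_mem_gridCube hδ hx').symm)

lemma dist_le_of_mem_gridCube {δ : ℝ} (hδ : 0 ≤ δ) {z : Fin n → ℤ}
    {x y : EuclideanSpace ℝ (Fin n)} (hx : x ∈ gridCube δ z) (hy : y ∈ gridCube δ z) :
    dist x y ≤ √n * δ := by
  have hcoord : ∀ i, dist (x i) (y i) ^ 2 ≤ δ ^ 2 := fun i => by
    obtain ⟨hx₁, hx₂⟩ := mem_gridCube.1 hx i
    obtain ⟨hy₁, hy₂⟩ := mem_gridCube.1 hy i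
    rw [Real.dist_eq, sq_abs]
    nlinarith
  calc dist x y = √(∑ i, dist (x i) (y i) ^ 2) := EuclideanSpace.dist_eq x y
    _ ≤ √(∑ _i : Fin n, δ ^ 2) := Real.sqrt_le_sqrt (Finset.sum_le_sum fun i _ => hcoord i)
    _ = √n * δ := by
      rw [Finset.sum_const, Finset.card_univ, Fintype.card_fin, nsmul_eq_mul,
        Real.sqrt_mul (Nat.cast_nonneg n), Real.sqrt_sq hδ]

lemma ediam_gridCube_le {δ : ℝ} (hδ : 0 ≤ δ) (z : Fin n → ℤ) :
    ediam (gridCube δ z) ≤ ENNReal.ofReal (√n * δ) :=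
  ediam_le fun _ hx _ hy => by
    rw [edist_dist]
    exact ENNReal.ofReal_le_ofReal (dist_le_of_mem_gridCube hδ hx hy)

def gridCubesMeeting (S : Set (EuclideanSpace ℝ (Fin n))) (δ : ℝ) : Set (Fin n → ℤ) :=
  {z | (gridCube δ z ∩ S).Nonempty}

section Cover

variable {S : Set (EuclideanSpace ℝ (Fin n))} {δ ε : ℝ}

lemma subset_iUnion_gridCubesMeeting (hδ : 0 < δ) :
    S ⊆ ⋃ z : gridCubesMeeting S δ, gridCube δ z.1 := fun x hx =>
  mem_iUnion.2 ⟨⟨_, x, mem_gridCube_floor hδ x, hx⟩, mem_gridCube_floor hδ x⟩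

lemma gridCube_subset_thickening (hδ : 0 ≤ δ) (hε : √n * δ < ε) {z : Fin n → ℤ}
    (hz : z ∈ gridCubesMeeting S δ) : gridCube δ z ⊆ thickening ε S := fun _ hx =>
  have ⟨y, hy, hyS⟩ := hz
  mem_thickening_iff.2 ⟨y, hyS, (dist_le_of_mem_gridCube hδ hx hy).trans_lt hε⟩

lemma card_gridCubesMeeting_mul_le (hδ : 0 < δ) (hε : √n * δ < ε) :
    ENat.card (gridCubesMeeting S δ) * ENNReal.ofReal δ ^ n ≤ volume (thickening ε S) :=
  calc ENat.card (gridCubesMeeting S δ) * ENNReal.ofReal δ ^ n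
      = ∑' z : gridCubesMeeting S δ, volume (gridCube δ z.1) := by
        simp only [volume_gridCube, ENNReal.tsum_const]
    _ = volume (⋃ z : gridCubesMeeting S δ, gridCube δ z.1) :=
        (measure_iUnion ((pairwise_disjoint_gridCube hδ).comp_of_injective Subtype.val_injective)
          fun z => measurableSet_gridCube δ z.1).symm
    _ ≤ volume (thickening ε S) :=
        measure_mono (iUnion_subset fun z => gridCube_subset_thickening hδ.le hε z.2)

end Cover

lemma sqrt_mul_div_sqrt_add_one_lt {ε : ℝ} (hε : 0 < ε) : √n * (ε / (√n + 1)) < ε := by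
  rw [mul_div_assoc', div_lt_iff₀ (by positivity)]
  nlinarith [Real.sqrt_nonneg n]

lemma rpow_div_div_pow_eq {ε c : ℝ} (hε : 0 < ε) (hc : 0 < c) (m : ℝ) :
    ε ^ m / (ε / c) ^ n = c ^ n / ε ^ ((n : ℝ) - m) := by
  rw [Real.rpow_sub hε, Real.rpow_natCast, div_pow]
  field_simp

lemma tsum_ediam_gridCube_rpow_le {m : ℝ} (hm : 0 ≤ m) (S : Set (EuclideanSpace ℝ (Fin n)))
    {ε : ℝ} (hε : 0 < ε) :
    ∑' z : gridCubesMeeting S (ε / (√n + 1)), ediam (gridCube (ε / (√n + 1)) z.1) ^ m ≤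
      ENNReal.ofReal ((√n + 1) ^ n) *
        (volume (thickening ε S) / ENNReal.ofReal (ε ^ ((n : ℝ) - m))) := by
  set c := √n + 1
  have hc : 0 < c := by positivity
  have hδ : 0 < ε / c := div_pos hε hc
  have hside : √n * (ε / c) < ε := sqrt_mul_div_sqrt_add_one_lt hε
  have hcard : ENat.card (gridCubesMeeting S (ε / c)) ≤
      volume (thickening ε S) / ENNReal.ofReal ((ε / c) ^ n) := by
    rw [ENNReal.le_div_iff_mul_le (Or.inl (by positivity)) (Or.inl ENNReal.ofReal_ne_top),
      ENNReal.ofReal_pow hδ.le]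
    exact card_gridCubesMeeting_mul_le hδ hside
  calc ∑' z : gridCubesMeeting S (ε / c), ediam (gridCube (ε / c) z.1) ^ m
      ≤ ∑' _z : gridCubesMeeting S (ε / c), ENNReal.ofReal (ε ^ m) := by
        refine ENNReal.tsum_le_tsum fun z => ?_
        rw [← ENNReal.ofReal_rpow_of_pos hε]
        exact ENNReal.rpow_le_rpow ((ediam_gridCube_le hδ.le z.1).trans
          (ENNReal.ofReal_le_ofReal hside.le)) hm
    _ ≤ volume (thickening ε S) / ENNReal.ofReal ((ε / c) ^ n) * ENNReal.ofReal (ε ^ m) := by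
        rw [ENNReal.tsum_const]; gcongr
    _ = ENNReal.ofReal (ε ^ m / (ε / c) ^ n) * volume (thickening ε S) := by
        rw [ENNReal.ofReal_div_of_pos (by positivity)]
        simp only [ENNReal.div_eq_inv_mul]; ring
    _ = ENNReal.ofReal (c ^ n) *
          (volume (thickening ε S) / ENNReal.ofReal (ε ^ ((n : ℝ) - m))) := by
        rw [rpow_div_div_pow_eq hε hc, ENNReal.ofReal_div_of_pos (by positivity)]
        simp only [ENNReal.div_eq_inv_mul]; ring

theorem hausdorffMeasure_le_mul_liminf {m : ℝ} (hm : 0 ≤ m) (S : Set (EuclideanSpace ℝ (Fin n))) :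
    μH[m] S ≤ ENNReal.ofReal ((√n + 1) ^ n) *
      liminf (fun ε : ℝ => volume (thickening ε S) / ENNReal.ofReal (ε ^ ((n : ℝ) - m)))
        (nhdsWithin 0 (Ioi 0)) := by
  have hc : 0 < √n + 1 := by positivity
  have hr : Tendsto ENNReal.ofReal (nhdsWithin 0 (Ioi 0)) (nhds 0) :=
    ENNReal.ofReal_zero ▸ (ENNReal.continuous_ofReal.tendsto 0).mono_left nhdsWithin_le_nhds
  calc μH[m] S
      ≤ liminf (fun ε : ℝ => ∑' z : gridCubesMeeting S (ε / (√n + 1)),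
          ediam (gridCube (ε / (√n + 1)) z.1) ^ m) (nhdsWithin 0 (Ioi 0)) := by
        refine Measure.hausdorffMeasure_le_liminf_tsum m S ENNReal.ofReal hr _ ?_ ?_
        all_goals filter_upwards [self_mem_nhdsWithin] with ε (hε : 0 < ε)
        · exact fun z => (ediam_gridCube_le (div_pos hε hc).le z.1).trans
            (ENNReal.ofReal_le_ofReal (sqrt_mul_div_sqrt_add_one_lt hε).le)
        · exact subset_iUnion_gridCubesMeeting (div_pos hε hc)
    _ ≤ liminf (fun ε : ℝ => ENNReal.ofReal ((√n + 1) ^ n) *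
          (volume (thickening ε S) / ENNReal.ofReal (ε ^ ((n : ℝ) - m))))
          (nhdsWithin 0 (Ioi 0)) := by
        refine liminf_le_liminf ?_
        filter_upwards [self_mem_nhdsWithin] with ε (hε : 0 < ε)
        exact tsum_ediam_gridCube_rpow_le hm S hε
    _ = _ := ENNReal.liminf_const_mul_of_ne_top ENNReal.ofReal_ne_top

end MinkowskiContent

open MinkowskiContent in
theorem stmt8_general (n : ℕ) (m : ℝ) (hm0 : 0 ≤ m) :
    ∃ C : ENNReal, C ≠ ⊤ ∧
      (∀ S : Set (EuclideanSpace ℝ (Fin n)),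
        μH[m] S ≤ C * Filter.liminf
          (fun ε : ℝ => volume (Metric.thickening ε S) / ENNReal.ofReal (ε ^ ((n : ℝ) - m)))
          (nhdsWithin 0 (Set.Ioi 0))) ∧
      (∀ S : Set (EuclideanSpace ℝ (Fin n)),
        Filter.liminf
          (fun ε : ℝ => volume (Metric.thickening ε S) / ENNReal.ofReal (ε ^ ((n : ℝ) - m)))
          (nhdsWithin 0 (Set.Ioi 0)) = 0 → μH[m] S = 0) :=
  ⟨_, ENNReal.ofReal_ne_top, hausdorffMeasure_le_mul_liminf hm0, fun S h0 =>
    nonpos_iff_eq_zero.1 ((hausdorffMeasure_le_mul_liminf hm0 S).trans_eq (by rw [h0, mul_zero]))⟩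

/-- The m-dimensional Hausdorff measure of S ⊆ ℝⁿ is bounded by a dimensional constant times the
m-dimensional lower Minkowski content; in particular vanishing content forces H^m(S) = 0. -/
theorem stmt8 (n : ℕ) (m : ℝ) (hm0 : 0 ≤ m) (hmn : m ≤ n) :
    ∃ C : ENNReal, C ≠ ⊤ ∧
      (∀ S : Set (EuclideanSpace ℝ (Fin n)),
        μH[m] S ≤ C * Filter.liminf
          (fun ε : ℝ => volume (Metric.thickening ε S) / ENNReal.ofReal (ε ^ ((n : ℝ) - m)))
          (nhdsWithin 0 (Set.Ioi 0))) ∧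
      (∀ S : Set (EuclideanSpace ℝ (Fin n)),
        Filter.liminf
          (fun ε : ℝ => volume (Metric.thickening ε S) / ENNReal.ofReal (ε ^ ((n : ℝ) - m)))
          (nhdsWithin 0 (Set.Ioi 0)) = 0 → μH[m] S = 0) :=
  stmt8_general n m hm0
end

section
/- Let f : ℝⁿ → ℝ be Lipschitz, and for ε > 0 let σ be a smooth nonnegative function with σ = ε on S_ε, σ = 0 outside S_{2ε}, and |∇σ| ≤ 3. Define f_ε(x) = ∫ f(x − σ(x)y) φ(y) dy. Then f_ε = f outside S_{2ε}, and f_ε is Lipschitz with Lipschitz constant at most 4L, where L is the Lipschitz constant of f. -/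
open MeasureTheory Metric Filter

/-- The variable-scale mollification f_ε(x) = ∫ f(x − σ(x)y)φ(y) dy of an L-Lipschitz f agrees
with f outside S_{2ε} and is Lipschitz with constant at most 4L, given σ smooth nonnegative with
σ = ε on S_ε, σ = 0 outside S_{2ε}, |∇σ| ≤ 3. -/
theorem stmt11 (n : ℕ) (L : NNReal) (f : EuclideanSpace ℝ (Fin n) → ℝ)
    (hf : LipschitzWith L f)
    (S : Set (EuclideanSpace ℝ (Fin n))) (ε : ℝ) (hε : 0 < ε)
    (φ : EuclideanSpace ℝ (Fin n) → ℝ) (hφsmooth : ContDiff ℝ (⊤ : ℕ∞) φ)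
    (hφnonneg : ∀ y, 0 ≤ φ y) (hφsupp : tsupport φ ⊆ Metric.closedBall 0 1)
    (hφint : ∫ y, φ y = 1)
    (σ : EuclideanSpace ℝ (Fin n) → ℝ) (hσsmooth : ContDiff ℝ (⊤ : ℕ∞) σ)
    (hσnonneg : ∀ x, 0 ≤ σ x)
    (hσin : ∀ x ∈ Metric.thickening ε S, σ x = ε)
    (hσout : ∀ x ∉ Metric.thickening (2 * ε) S, σ x = 0)
    (hσgrad : ∀ x, ‖fderiv ℝ σ x‖ ≤ 3) :
    (∀ x ∉ Metric.thickening (2 * ε) S, (∫ y, f (x - σ x • y) * φ y) = f x) ∧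
    LipschitzWith (4 * L) (fun x => ∫ y, f (x - σ x • y) * φ y) := by
  have hφcs : HasCompactSupport φ :=
    IsCompact.of_isClosed_subset (isCompact_closedBall 0 1) (isClosed_tsupport φ) hφsupp
  have hφInt : Integrable φ := hφsmooth.continuous.integrable_of_hasCompactSupport hφcs
  have hint : ∀ x, Integrable (fun y => f (x - σ x • y) * φ y) := by
    intro x
    have hc : Continuous (fun y : EuclideanSpace ℝ (Fin n) => f (x - σ x • y) * φ y) :=
      (hf.continuous.comp (f := fun y => x - σ x • y) (continuous_const.sub (continuous_const_smul (σ x)))).mul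
        hφsmooth.continuous
    exact hc.integrable_of_hasCompactSupport hφcs.mul_left
  have hσlip : LipschitzWith 3 σ := by
    apply lipschitzWith_of_nnnorm_fderiv_le (hσsmooth.differentiable (by simp))
    intro x
    rw [← NNReal.coe_le_coe]
    push_cast
    exact hσgrad x
  constructor
  · intro x hx
    rw [show (fun y => f (x - σ x • y) * φ y) = fun y => f x * φ y by
      funext y; rw [hσout x hx, zero_smul, sub_zero]]
    rw [integral_const_mul, hφint, mul_one]
  · apply LipschitzWith.of_dist_le_mul
    intro x x'
    have hσd : |σ x - σ x'| ≤ 3 * ‖x - x'‖ := by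
      have := hσlip.dist_le_mul x x'
      simpa [Real.dist_eq, dist_eq_norm] using this
    have hbound : ∀ y, ‖f (x - σ x • y) * φ y - f (x' - σ x' • y) * φ y‖ ≤
        (4 * L * ‖x - x'‖) * φ y := by
      intro y
      by_cases hy : φ y = 0
      · simp [hy]
      · have hy1 : ‖y‖ ≤ 1 := by
          have := hφsupp (subset_tsupport φ hy)
          simpa [mem_closedBall_zero_iff] using this
        rw [← sub_mul, norm_mul, Real.norm_eq_abs (φ y), abs_of_nonneg (hφnonneg y)]
        apply mul_le_mul_of_nonneg_right _ (hφnonneg y)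
        have hab : (x - σ x • y) - (x' - σ x' • y) = (x - x') - (σ x - σ x') • y := by
          rw [sub_smul]; abel
        calc ‖f (x - σ x • y) - f (x' - σ x' • y)‖
            ≤ L * ‖(x - σ x • y) - (x' - σ x' • y)‖ := by
              have := hf.dist_le_mul (x - σ x • y) (x' - σ x' • y)
              simpa [dist_eq_norm] using this
          _ = L * ‖(x - x') - (σ x - σ x') • y‖ := by rw [hab]
          _ ≤ L * (‖x - x'‖ + ‖(σ x - σ x') • y‖) := by
              gcongr; exact norm_sub_le _ _
          _ ≤ L * (‖x - x'‖ + 3 * ‖x - x'‖ * 1) := by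
              gcongr
              rw [norm_smul, Real.norm_eq_abs]
              exact mul_le_mul hσd hy1 (norm_nonneg y) (by positivity)
          _ = 4 * L * ‖x - x'‖ := by ring
    have hcalc : ‖(∫ y, f (x - σ x • y) * φ y) - ∫ y, f (x' - σ x' • y) * φ y‖ ≤
        4 * L * ‖x - x'‖ := by
      rw [← integral_sub (hint x) (hint x')]
      calc ‖∫ y, (f (x - σ x • y) * φ y - f (x' - σ x' • y) * φ y)‖
          ≤ ∫ y, ‖f (x - σ x • y) * φ y - f (x' - σ x' • y) * φ y‖ :=
            norm_integral_le_integral_norm _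
        _ ≤ ∫ y, (4 * L * ‖x - x'‖) * φ y := by
            apply integral_mono ((hint x).sub (hint x')).norm (hφInt.const_mul _) hbound
        _ = 4 * L * ‖x - x'‖ := by rw [integral_const_mul, hφint, mul_one]
    calc dist (∫ y, f (x - σ x • y) * φ y) (∫ y, f (x' - σ x' • y) * φ y)
        = ‖(∫ y, f (x - σ x • y) * φ y) - ∫ y, f (x' - σ x' • y) * φ y‖ := Real.dist_eq _ _
      _ ≤ 4 * L * ‖x - x'‖ := hcalc
      _ = (4 * L : NNReal) * dist x x' := by
          rw [dist_eq_norm]; push_cast; ring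
end
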